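/- arXiv:1307.5094 — 8 statements merged into one kernel-verified Lean document; each statement's English description precedes it below -/
import Mathlib

section
/- For every integer n > 1, δ(n-1) ≤ δ(n); that is, the minimum diameter over all double-(n-1) strings is at most the minimum diameter over all double-n strings. -/
/-!
Deleting both occurrences of the last symbol from a double-`n` string and closing up the
gaps gives a double-`(n - 1)` string. The surviving positions are relabelled by an increasing
map, which can only shrink distances, so the diameter does not grow.
-/
/-- A double-`n` string: a sequence of length `2n` over `n` symbols in which
each symbol appears exactly twice. -/
def IsDoubleString (n : ℕ) (s : Fin (2 * n) → Fin n) : Prop :=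
  ∀ a : Fin n, (Finset.univ.filter (fun i => s i = a)).card = 2

/-- The diameter of the string `s` is at most `d`: every pair of distinct
symbols has a pair of occurrences at positional distance at most `d`. -/
def DiamLE (n d : ℕ) (s : Fin (2 * n) → Fin n) : Prop :=
  ∀ a b : Fin n, a ≠ b →
    ∃ i j : Fin (2 * n), s i = a ∧ s j = b ∧ Nat.dist i.val j.val ≤ d

/-- `delta n` : the minimum diameter over all double-`n` strings. -/
noncomputable def delta (n : ℕ) : ℕ :=
  sInf {d | ∃ s : Fin (2 * n) → Fin n, IsDoubleString n s ∧ DiamLE n d s}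

theorem Fin.dist_le_dist_of_strictMono {M N : ℕ} {f : Fin M → Fin N} (hf : StrictMono f)
    (k l : Fin M) : Nat.dist k l ≤ Nat.dist (f k) (f l) := by
  have sub_le {k l : Fin M} (hkl : k ≤ l) : (l : ℕ) - k ≤ f l - f k := by
    simpa only [Fin.card_Ico] using Finset.card_le_card_of_injOn (s := Finset.Ico k l)
      (t := Finset.Ico (f k) (f l)) f
      (fun i hi => by
        simp only [Finset.coe_Ico, Set.mem_Ico] at hi ⊢
        exact ⟨hf.monotone hi.1, hf hi.2⟩)
      hf.injective.injOn
  unfold Nat.dist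
  rcases le_total k l with hkl | hlk
  · have := sub_le hkl; have := hf.monotone hkl; rw [Fin.le_def] at *; omega
  · have := sub_le hlk; have := hf.monotone hlk; rw [Fin.le_def] at *; omega

theorem exists_isDoubleString (n : ℕ) : ∃ s : Fin (2 * n) → Fin n, IsDoubleString n s := by
  refine ⟨fun i => ⟨i / 2, by omega⟩, fun a => ?_⟩
  have hpair : Finset.univ.filter (fun i : Fin (2 * n) => (⟨i / 2, by omega⟩ : Fin n) = a)
      = {⟨2 * a, by omega⟩, ⟨2 * a + 1, by omega⟩} := by
    ext i
    simp only [Finset.mem_filter, Finset.mem_univ, true_and, Finset.mem_insert,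
      Finset.mem_singleton, Fin.ext_iff]
    omega
  rw [hpair, Finset.card_pair (by simp)]

theorem IsDoubleString.diamLE_two_mul {n : ℕ} {s : Fin (2 * n) → Fin n}
    (hs : IsDoubleString n s) : DiamLE n (2 * n) s := by
  intro a b _
  obtain ⟨i, hi⟩ := Finset.card_pos.mp (by rw [hs a]; omega)
  obtain ⟨j, hj⟩ := Finset.card_pos.mp (by rw [hs b]; omega)
  simp only [Finset.mem_filter, Finset.mem_univ, true_and] at hi hj
  exact ⟨i, j, hi, hj, by unfold Nat.dist; omega⟩

theorem delta_le {n d : ℕ} {s : Fin (2 * n) → Fin n} (hs : IsDoubleString n s)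
    (hd : DiamLE n d s) : delta n ≤ d :=
  Nat.sInf_le ⟨s, hs, hd⟩

theorem exists_diamLE_delta (n : ℕ) :
    ∃ s : Fin (2 * n) → Fin n, IsDoubleString n s ∧ DiamLE n (delta n) s := by
  obtain ⟨s, hs⟩ := exists_isDoubleString n
  exact Nat.sInf_mem (s := {d | ∃ s, IsDoubleString n s ∧ DiamLE n d s})
    ⟨2 * n, s, hs, hs.diamLE_two_mul⟩

namespace IsDoubleString

variable {m : ℕ} {s : Fin (2 * (m + 1)) → Fin (m + 1)}

theorem card_filter_ne_last (hs : IsDoubleString (m + 1) s) :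
    (Finset.univ.filter fun i => s i ≠ Fin.last m).card = 2 * m := by
  have hsplit := Finset.card_filter_add_card_filter_not (s := Finset.univ)
    (fun i => s i = Fin.last m)
  rw [hs (Fin.last m), Finset.card_univ, Fintype.card_fin] at hsplit
  simp only [ne_eq]
  omega

variable (hs : IsDoubleString (m + 1) s)

noncomputable def eraseLastPos : Fin (2 * m) ↪o Fin (2 * (m + 1)) :=
  (Finset.univ.filter fun i => s i ≠ Fin.last m).orderEmbOfFin hs.card_filter_ne_last

theorem mem_range_eraseLastPos {i : Fin (2 * (m + 1))} :
    i ∈ Set.range hs.eraseLastPos ↔ s i ≠ Fin.last m := by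
  simp [eraseLastPos, Finset.range_orderEmbOfFin]

theorem eraseLastPos_ne_last (k : Fin (2 * m)) : s (hs.eraseLastPos k) ≠ Fin.last m :=
  hs.mem_range_eraseLastPos.mp ⟨k, rfl⟩

noncomputable def eraseLast (k : Fin (2 * m)) : Fin m :=
  (s (hs.eraseLastPos k)).castPred (hs.eraseLastPos_ne_last k)

theorem castSucc_eraseLast (k : Fin (2 * m)) :
    (hs.eraseLast k).castSucc = s (hs.eraseLastPos k) :=
  Fin.castSucc_castPred _ _

theorem exists_eraseLastPos_eq {i : Fin (2 * (m + 1))} {a : Fin m} (hi : s i = a.castSucc) :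
    ∃ k, hs.eraseLast k = a ∧ hs.eraseLastPos k = i := by
  obtain ⟨k, rfl⟩ := hs.mem_range_eraseLastPos.mpr (hi ▸ (Fin.castSucc_lt_last a).ne)
  exact ⟨k, Fin.castSucc_injective _ (by rw [castSucc_eraseLast, hi]), rfl⟩

theorem isDoubleString_eraseLast : IsDoubleString m hs.eraseLast := by
  intro a
  have hmap : (Finset.univ.filter fun k => hs.eraseLast k = a).map hs.eraseLastPos.toEmbedding
      = Finset.univ.filter fun i => s i = a.castSucc := by
    ext i
    simp only [Finset.mem_map, Finset.mem_filter, Finset.mem_univ, true_and,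
      RelEmbedding.coe_toEmbedding]
    constructor
    · rintro ⟨k, rfl, rfl⟩
      exact (hs.castSucc_eraseLast k).symm
    · exact hs.exists_eraseLastPos_eq
  rw [← Finset.card_map, hmap, hs a.castSucc]

theorem diamLE_eraseLast {d : ℕ} (hd : DiamLE (m + 1) d s) : DiamLE m d hs.eraseLast := by
  intro a b hab
  obtain ⟨i, j, hi, hj, hij⟩ := hd a.castSucc b.castSucc (Fin.castSucc_injective _ |>.ne hab)
  obtain ⟨k, hka, rfl⟩ := hs.exists_eraseLastPos_eq hi
  obtain ⟨l, hlb, rfl⟩ := hs.exists_eraseLastPos_eq hj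
  exact ⟨k, l, hka, hlb,
    (Fin.dist_le_dist_of_strictMono hs.eraseLastPos.strictMono k l).trans hij⟩

end IsDoubleString

theorem delta_mono_general (n : ℕ) : delta (n - 1) ≤ delta n := by
  rcases n with _ | m
  · rfl -- `0 - 1 = 0` in `ℕ`
  obtain ⟨s, hs, hd⟩ := exists_diamLE_delta (m + 1)
  exact delta_le hs.isDoubleString_eraseLast (hs.diamLE_eraseLast hd)

/-- For every integer `n > 1`, `δ(n-1) ≤ δ(n)`. -/
theorem delta_mono (n : ℕ) (hn : 1 < n) : delta (n - 1) ≤ delta n :=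
  delta_mono_general n
end

section
/- For every integer n > 2, δ(n) < n/2: there exists a double-n string whose diameter is strictly less than n/2. -/
/-!
Write the symbols in order and then once more with the two middle quarter-blocks exchanged,
`S₁ S₂ S₃ S₄ S₁ S₃ S₂ S₄`. Two symbols that are more than `n / 2` apart in the first copy lie in
far-apart blocks: either one is in `S₁` and the other in `S₄`, and they meet across the middle
of the string, or one of them is in `S₂ ∪ S₃`, and the exchange brings them closer in the
second copy or across the middle.
-/

open Function

def permString {n : ℕ} (σ : Equiv.Perm (Fin n)) : Fin (2 * n) → Fin n :=
  Fin.append id σ ∘ finCongr (two_mul n)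

theorem permString_castAdd {n : ℕ} (σ : Equiv.Perm (Fin n)) (i : Fin n) :
    permString σ ((finCongr (two_mul n)).symm (Fin.castAdd n i)) = i := by
  simp only [permString, comp_apply, Equiv.apply_symm_apply, Fin.append_left, id]

theorem permString_natAdd {n : ℕ} (σ : Equiv.Perm (Fin n)) (i : Fin n) :
    permString σ ((finCongr (two_mul n)).symm (Fin.natAdd n i)) = σ i := by
  simp only [permString, comp_apply, Equiv.apply_symm_apply, Fin.append_right]

theorem isDoubleString_permString {n : ℕ} (σ : Equiv.Perm (Fin n)) :
    IsDoubleString n (permString σ) := by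
  intro a
  rw [Finset.card_filter, ← (finCongr (two_mul n)).symm.sum_comp, Fin.sum_univ_add]
  simp only [permString_castAdd, permString_natAdd, ← Finset.card_filter]
  simp [← Equiv.eq_symm_apply, Finset.filter_eq']

theorem diamLE_permString {n d : ℕ} (σ : Equiv.Perm (Fin n))
    (h : ∀ a b : Fin n, a ≠ b →
      (a : ℕ).dist b ≤ d ∨ (σ.symm a : ℕ).dist (σ.symm b) ≤ d ∨
        (a : ℕ).dist (n + σ.symm b) ≤ d ∨ (n + σ.symm a).dist b ≤ d) :
    DiamLE n d (permString σ) := by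
  have first (a : Fin n) := permString_castAdd σ a
  have second (a : Fin n) :
      permString σ ((finCongr (two_mul n)).symm (Fin.natAdd n (σ.symm a))) = a := by
    rw [permString_natAdd, Equiv.apply_symm_apply]
  intro a b hab
  rcases h a b hab with h | h | h | h
  · exact ⟨_, _, first a, first b, h⟩
  · exact ⟨_, _, second a, second b, (Nat.dist_add_add_left n _ _).trans_le h⟩
  · exact ⟨_, _, first a, second b, h⟩
  · exact ⟨_, _, second a, first b, h⟩

def blockSwap (p b j : ℕ) : ℕ :=
  if j < p then j
  else if j < p + b then j + b
  else if j < p + 2 * b then j - b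
  else j

theorem blockSwap_involutive (p b : ℕ) : Involutive (blockSwap p b) := by
  intro j
  unfold blockSwap
  split_ifs <;> omega

theorem blockSwap_lt {p b n j : ℕ} (h : p + 2 * b ≤ n) (hj : j < n) : blockSwap p b j < n := by
  unfold blockSwap
  split_ifs <;> omega

def blockSwapPerm {p b n : ℕ} (h : p + 2 * b ≤ n) : Equiv.Perm (Fin n) :=
  Involutive.toPerm (fun j => ⟨blockSwap p b j, blockSwap_lt h j.2⟩)
    fun j => Fin.ext (blockSwap_involutive p b j)

theorem quarterBlockSwap_dist_le {n p b A B : ℕ} (hn : 2 < n) (hb : b = (n + 2) / 4)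
    (hp : p = (n + 1 - 2 * b) / 2) (hA : A < n) (hB : B < n) (hAB : A ≠ B) :
    A.dist B ≤ (n - 1) / 2 ∨ (blockSwap p b A).dist (blockSwap p b B) ≤ (n - 1) / 2 ∨
      A.dist (n + blockSwap p b B) ≤ (n - 1) / 2 ∨
      (n + blockSwap p b A).dist B ≤ (n - 1) / 2 := by
  unfold blockSwap Nat.dist
  split_ifs <;> omega

/-- For every integer `n > 2`, `δ(n) < n/2`: there exists a double-`n` string
whose diameter is strictly less than `n/2`. -/
theorem delta_lt_half (n : ℕ) (hn : 2 < n) :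
    ∃ (s : Fin (2 * n) → Fin n) (d : ℕ),
      IsDoubleString n s ∧ DiamLE n d s ∧ 2 * d < n := by
  -- `S₂` and `S₃` have `b = round (n / 4)` symbols, `S₁` and `S₄` split the remaining ones evenly.
  set b := (n + 2) / 4 with hb
  set p := (n + 1 - 2 * b) / 2 with hp
  have hblocks : p + 2 * b ≤ n := by omega
  refine ⟨permString (blockSwapPerm hblocks), (n - 1) / 2,
    isDoubleString_permString _, diamLE_permString _ fun A B hAB => ?_, by omega⟩
  exact quarterBlockSwap_dist_le hn hb hp A.2 B.2 (Fin.val_ne_of_ne hAB)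
end

section
/- If n = 4r for a positive integer r, then the double-n string S1 S2 S3 S4 S1 S3 S2 S4, where Si is the block (i-1)r+1, ..., ir, has diameter 2r - 1; in particular δ(4r) ≤ 2r - 1. -/
/-!
The string is the blow-up of the pattern `w = 0 1 2 3 0 2 1 3` by blocks of length `r`: position
`β r + k` (`k < r`) carries the symbol `w(β) r + k`. Blowing up preserves being a double string,
and since any two symbols of `w` occur next to each other somewhere, any two symbols of the blow-up
occur within distance `2r - 1`. Equality is attained by the first symbol of `S₁` and the last
symbol of `S₂`.
-/

def blockEquiv (q r : ℕ) : Fin (2 * q) × Fin r ≃ Fin (2 * (q * r)) :=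
  finProdFinEquiv.trans (finCongr (Nat.mul_assoc 2 q r))

@[simp]
lemma blockEquiv_apply_val {q r : ℕ} (x : Fin (2 * q) × Fin r) :
    (blockEquiv q r x).val = x.2 + r * x.1 := rfl

def blowUp {q : ℕ} (w : Fin (2 * q) → Fin q) (r : ℕ) (p : Fin (2 * (q * r))) : Fin (q * r) :=
  finProdFinEquiv (Prod.map w id ((blockEquiv q r).symm p))

@[simp]
lemma blowUp_blockEquiv {q r : ℕ} (w : Fin (2 * q) → Fin q) (x : Fin (2 * q) × Fin r) :
    blowUp w r (blockEquiv q r x) = finProdFinEquiv (w x.1, x.2) := by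
  simp [blowUp, Prod.map]

lemma card_filter_prodMap_eq {α β γ δ : Type*} [Fintype α] [Fintype β] [DecidableEq γ]
    [DecidableEq δ] (f : α → γ) (g : β → δ) (y : γ × δ) :
    (Finset.univ.filter (fun x => Prod.map f g x = y)).card =
      (Finset.univ.filter (fun a => f a = y.1)).card *
        (Finset.univ.filter (fun b => g b = y.2)).card := by
  simp only [Prod.ext_iff, Prod.map_fst, Prod.map_snd]
  rw [← Finset.card_product, ← Finset.filter_product, Finset.univ_product_univ]

theorem isDoubleString_blowUp {q : ℕ} {w : Fin (2 * q) → Fin q} (hw : IsDoubleString q w)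
    (r : ℕ) : IsDoubleString (q * r) (blowUp w r) := by
  intro a
  obtain ⟨⟨c, k⟩, rfl⟩ := finProdFinEquiv.surjective a
  calc (Finset.univ.filter (fun p => blowUp w r p = finProdFinEquiv (c, k))).card
      = (Finset.univ.filter (fun x => Prod.map w id x = (c, k))).card := by
        exact Finset.card_equiv (blockEquiv q r).symm fun p => by simp [blowUp]
    _ = 2 := by
        rw [card_filter_prodMap_eq, hw c]
        simp [Finset.filter_eq']

lemma Nat.dist_add_mul_le {r k k' β β' : ℕ} (hk : k < r) (hk' : k' < r)
    (hβ : Nat.dist β β' ≤ 1) : Nat.dist (k + r * β) (k' + r * β') ≤ 2 * r - 1 := by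
  unfold Nat.dist at hβ ⊢
  obtain rfl | rfl | rfl : β' = β ∨ β' = β + 1 ∨ β = β' + 1 := by omega
  all_goals ring_nf; omega

theorem diamLE_blowUp {q : ℕ} {w : Fin (2 * q) → Fin q} (hw : IsDoubleString q w)
    (hd : DiamLE q 1 w) (r : ℕ) : DiamLE (q * r) (2 * r - 1) (blowUp w r) := by
  intro a b hab
  obtain ⟨⟨c, k⟩, rfl⟩ := finProdFinEquiv.surjective a
  obtain ⟨⟨c', k'⟩, rfl⟩ := finProdFinEquiv.surjective b
  obtain ⟨β, β', rfl, rfl, hβ⟩ : ∃ β β', w β = c ∧ w β' = c' ∧ Nat.dist β β' ≤ 1 := by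
    by_cases hc : c = c'
    · obtain ⟨β, hβ⟩ : (Finset.univ.filter (fun β => w β = c)).Nonempty := by
        rw [← Finset.card_pos, hw c]; norm_num
      exact ⟨β, β, (Finset.mem_filter.1 hβ).2, hc ▸ (Finset.mem_filter.1 hβ).2, by simp⟩
    · exact hd c c' hc
  refine ⟨blockEquiv q r (β, k), blockEquiv q r (β', k'), by simp, by simp, ?_⟩
  exact Nat.dist_add_mul_le k.isLt k'.isLt hβ

def pattern : Fin 8 → Fin 4 := ![0, 1, 2, 3, 0, 2, 1, 3]

lemma isDoubleString_pattern : IsDoubleString 4 pattern := by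
  unfold IsDoubleString; decide

lemma diamLE_pattern : DiamLE 4 1 pattern := by
  unfold DiamLE; decide

/-- The symbols `0` and `2r - 1` (first and last of their blocks `S₁`, `S₂`) sit at positions
`{0, 4r}` and `{2r - 1, 7r - 1}`. -/
lemma le_of_diamLE_blowUp_pattern {r d : ℕ} (hr : 0 < r)
    (h : DiamLE (4 * r) d (blowUp pattern r)) : 2 * r - 1 ≤ d := by
  obtain ⟨i, j, hi, hj, hd⟩ :=
    h (finProdFinEquiv (0, ⟨0, hr⟩)) (finProdFinEquiv (1, ⟨r - 1, by omega⟩))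
      (by simp [Fin.ext_iff])
  obtain ⟨⟨β, k⟩, rfl⟩ := (blockEquiv 4 r).surjective i
  obtain ⟨⟨β', k'⟩, rfl⟩ := (blockEquiv 4 r).surjective j
  simp only [blowUp_blockEquiv, EmbeddingLike.apply_eq_iff_eq, Prod.mk.injEq] at hi hj
  obtain ⟨hwβ, rfl⟩ := hi
  obtain ⟨hwβ', rfl⟩ := hj
  have hβ : β = 0 ∨ β = 4 := (by decide : ∀ β, pattern β = 0 → β = 0 ∨ β = 4) β hwβ
  have hβ' : β' = 1 ∨ β' = 6 := (by decide : ∀ β, pattern β = 1 → β = 1 ∨ β = 6) β' hwβ'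
  simp only [blockEquiv_apply_val, Nat.dist] at hd
  rcases hβ with rfl | rfl <;> rcases hβ' with rfl | rfl <;>
    simp only [Nat.reduceMul, Fin.coe_ofNat_eq_mod, Nat.reduceMod, Nat.zero_mod,
      Nat.one_mod] at hd <;>
    omega

lemma blowUp_pattern_eq {r : ℕ} (hr : 0 < r) :
    blowUp pattern r = fun p => ⟨((![0, 1, 2, 3, 0, 2, 1, 3] : Fin 8 → ℕ)
          ⟨p.val / r % 8, Nat.mod_lt _ (by decide)⟩ * r + p.val % r) % (4 * r),
        Nat.mod_lt _ (Nat.mul_pos (by decide) hr)⟩ := by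
  funext p
  obtain ⟨⟨β, k⟩, rfl⟩ := (blockEquiv 4 r).surjective p
  have hdiv : (k + r * β) / r = β := by
    rw [Nat.add_mul_div_left _ _ hr, Nat.div_eq_of_lt k.isLt, zero_add]
  have hpat : ∀ β : Fin 8, (![0, 1, 2, 3, 0, 2, 1, 3] : Fin 8 → ℕ) β = pattern β := by decide
  have hlt := (finProdFinEquiv (pattern β, k)).isLt
  apply Fin.ext
  simp only [blowUp_blockEquiv, blockEquiv_apply_val, hdiv, Nat.mod_eq_of_lt β.isLt,
    Nat.add_mul_mod_self_left, Nat.mod_eq_of_lt k.isLt]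
  simp only [finProdFinEquiv_apply_val] at hlt ⊢
  rw [Fin.eta, hpat, Nat.mod_eq_of_lt (by rw [mul_comm]; omega)]
  ring

/-- For `n = 4r`, the double-`n` string `S₁S₂S₃S₄S₁S₃S₂S₄`, where `Sᵢ` is the
block `(i-1)r+1, …, ir`, has diameter exactly `2r - 1`; in particular
`δ(4r) ≤ 2r - 1`.  (Position `p` holds the symbol `b·r + (p mod r)` where `b`
is the `(p div r)`-th entry of the block pattern `0,1,2,3,0,2,1,3`; the `% (4*r)`
is the identity on these values and only serves to provide the `Fin` bound.) -/
theorem delta_four_r (r : ℕ) (hr : 0 < r) :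
    IsDoubleString (4 * r)
      (fun p => ⟨((![0, 1, 2, 3, 0, 2, 1, 3] : Fin 8 → ℕ)
          ⟨p.val / r % 8, Nat.mod_lt _ (by omega)⟩ * r + p.val % r) % (4 * r),
        Nat.mod_lt _ (by omega)⟩) ∧
    DiamLE (4 * r) (2 * r - 1)
      (fun p => ⟨((![0, 1, 2, 3, 0, 2, 1, 3] : Fin 8 → ℕ)
          ⟨p.val / r % 8, Nat.mod_lt _ (by omega)⟩ * r + p.val % r) % (4 * r),
        Nat.mod_lt _ (by omega)⟩) ∧
    (∀ d : ℕ, DiamLE (4 * r) d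
      (fun p => ⟨((![0, 1, 2, 3, 0, 2, 1, 3] : Fin 8 → ℕ)
          ⟨p.val / r % 8, Nat.mod_lt _ (by omega)⟩ * r + p.val % r) % (4 * r),
        Nat.mod_lt _ (by omega)⟩) → 2 * r - 1 ≤ d) ∧
    delta (4 * r) ≤ 2 * r - 1 := by
  rw [← blowUp_pattern_eq hr]
  have hdouble := isDoubleString_blowUp isDoubleString_pattern r
  have hdiam := diamLE_blowUp isDoubleString_pattern diamLE_pattern r
  exact ⟨hdouble, hdiam, fun _ => le_of_diamLE_blowUp_pattern hr,
    Nat.sInf_le ⟨_, hdouble, hdiam⟩⟩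
end

section
/- In any double-n string of diameter d with d < n, the first occurrence of a symbol at any position i ≤ n - d is not preceded by any repeated symbol; equivalently, the first n - d entries of the string are pairwise distinct symbols. -/
/-! Suppose the symbol `a` sits at two positions `i ≠ j < n - d`. These are its only
occurrences, and every other symbol has an occurrence within distance `d` of one of them,
so all `n` symbols occur among the first `n` positions. Hence the first `n` positions carry
pairwise distinct symbols by pigeonhole, contradicting `s i = s j`. -/

theorem IsDoubleString.eq_or_eq_of_apply_eq {n : ℕ} {s : Fin (2 * n) → Fin n}
    (hs : IsDoubleString n s) {i j k : Fin (2 * n)} (hij : i ≠ j) (hsij : s i = s j)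
    (hk : s k = s i) : k = i ∨ k = j := by
  have hpair : {i, j} = Finset.univ.filter (fun p => s p = s i) :=
    Finset.eq_of_subset_of_card_le (by intro p; aesop) (by rw [hs, Finset.card_pair hij])
  have hk' : k ∈ Finset.univ.filter (fun p => s p = s i) := by simpa using hk
  simpa [← hpair] using hk'

theorem DiamLE.exists_apply_eq_of_forall_lt {n d : ℕ} {s : Fin (2 * n) → Fin n}
    (hd : DiamLE n d s) {a : Fin n} {m : ℕ} (ha : ∃ i, s i = a)
    (hm : ∀ i, s i = a → i.val < m) (b : Fin n) : ∃ j, s j = b ∧ j.val < m + d := by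
  by_cases hab : a = b
  · obtain ⟨i, hi⟩ := ha
    exact ⟨i, hab ▸ hi, by have := hm i hi; omega⟩
  · obtain ⟨i, j, hi, hj, hij⟩ := hd a b hab
    have := hm i hi
    exact ⟨j, hj, by rw [Nat.dist] at hij; omega⟩

theorem eq_of_apply_eq_of_forall_exists_lt {m n : ℕ} (s : Fin m → Fin n) (hnm : n ≤ m)
    (hcover : ∀ b, ∃ j, s j = b ∧ j.val < n) {i j : Fin m} (hi : i.val < n) (hj : j.val < n)
    (hsij : s i = s j) : i = j := by
  have hsurj : Function.Surjective (s ∘ Fin.castLE hnm) := fun b => by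
    obtain ⟨j, hj, hjn⟩ := hcover b
    exact ⟨⟨j, hjn⟩, hj⟩
  have hinj := Finite.injective_iff_surjective.mpr hsurj
  exact Fin.ext (Fin.mk.inj_iff.mp (@hinj ⟨i, hi⟩ ⟨j, hj⟩ hsij))

theorem first_entries_distinct_general (n d : ℕ) (s : Fin (2 * n) → Fin n)
    (hs : IsDoubleString n s) (hd : DiamLE n d s)
    (i j : Fin (2 * n)) (hi : i.val < n - d) (hj : j.val < n - d)
    (hij : i ≠ j) : s i ≠ s j := by
  intro hsij
  have hocc : ∀ k, s k = s i → k.val < n - d := fun k hk => by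
    rcases hs.eq_or_eq_of_apply_eq hij hsij hk with rfl | rfl <;> assumption
  have hcover : ∀ b, ∃ k, s k = b ∧ k.val < n := fun b => by
    obtain ⟨k, hk, hkd⟩ := hd.exists_apply_eq_of_forall_lt ⟨i, rfl⟩ hocc b
    exact ⟨k, hk, by omega⟩
  exact hij (eq_of_apply_eq_of_forall_exists_lt s (by omega) hcover (by omega) (by omega) hsij)

/-- In any double-`n` string of diameter `d` with `d < n`, the first `n - d`
entries are pairwise distinct symbols. -/
theorem first_entries_distinct (n d : ℕ) (s : Fin (2 * n) → Fin n)
    (hs : IsDoubleString n s) (hd : DiamLE n d s) (hdn : d < n)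
    (i j : Fin (2 * n)) (hi : i.val < n - d) (hj : j.val < n - d)
    (hij : i ≠ j) : s i ≠ s j :=
  first_entries_distinct_general n d s hs hd i j hi hj hij
end

section
/- Let S be a double-n string with diameter d where d < n/2. For 1 ≤ i ≤ d+1, let r_i be the number of symbols j ≠ i such that both occurrences of j are within distance d of some occurrence of i. Then r_i ≤ 3d + i - n. -/
/-- The position of the first occurrence of the symbol `a` in `s`. -/
noncomputable def firstOcc (n : ℕ) (s : Fin (2 * n) → Fin n) (a : Fin n) : ℕ :=
  sInf {i | ∃ h : i < 2 * n, s ⟨i, h⟩ = a}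

/-!
Counting positions from `1`, the first `d + 1` positions carry the symbols `1, …, d + 1`, since a
repeated symbol there would leave too few positions within distance `d` of it. So `i` occurs at
position `i` and at some position `q`, and the positions within distance `d` of an occurrence
of `i` lie in `[1, i + d] ∪ [q - d, q + d]`: there are at most `(i + d) + (2d + 1)` of them.
Every symbol has an occurrence among these positions, by the diameter bound, and `i` together
with the `rᵢ` counted symbols has both; hence `n + rᵢ + 1 ≤ i + 3d + 1`.
-/

open Finset

lemma card_add_card_le_of_cover {α β : Type*} [Fintype β] [DecidableEq β]
    (f : α → β) (T : Finset α) (E : Finset β)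
    (hcover : ∀ b, ∃ a ∈ T, f a = b) (htwo : ∀ b ∈ E, 2 ≤ #{a ∈ T | f a = b}) :
    Fintype.card β + #E ≤ #T := by
  have hfiber : ∀ b, 1 + (if b ∈ E then 1 else 0) ≤ #{a ∈ T | f a = b} := by
    intro b
    split_ifs with hb
    · exact htwo b hb
    · obtain ⟨a, ha, rfl⟩ := hcover b
      exact card_pos.mpr ⟨a, mem_filter.mpr ⟨ha, rfl⟩⟩
  calc Fintype.card β + #E = ∑ b, (1 + if b ∈ E then 1 else 0) := by
        simp [sum_add_distrib]
    _ ≤ ∑ b, #{a ∈ T | f a = b} := sum_le_sum fun b _ => hfiber b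
    _ = #T := (card_eq_sum_card_fiberwise fun a _ => mem_univ (f a)).symm

def posBall (m c d : ℕ) : Finset (Fin m) :=
  {r | Nat.dist r c ≤ d}

lemma card_posBall_le (m c d : ℕ) : #(posBall m c d) ≤ c + d + 1 - (c - d) := by
  calc #(posBall m c d) ≤ #(Icc (c - d) (c + d)) := by
        refine card_le_card_of_injOn Fin.val (fun r hr => ?_) Fin.val_injective.injOn
        have hr : Nat.dist r c ≤ d := (mem_filter.mp hr).2
        unfold Nat.dist at hr
        simp only [coe_Icc, Set.mem_Icc]
        omega
    _ = c + d + 1 - (c - d) := Nat.card_Icc _ _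

section DoubleString

variable {n d : ℕ} {s : Fin (2 * n) → Fin n}

def occNbhd (s : Fin (2 * n) → Fin n) (d : ℕ) (a : Fin n) : Finset (Fin (2 * n)) :=
  {r | ∃ q, s q = a ∧ Nat.dist r.val q.val ≤ d}

/-- Contains `a` itself, so the paper's `rₐ` is `#(enclosedSymbols s d a) - 1`. -/
def enclosedSymbols (s : Fin (2 * n) → Fin n) (d : ℕ) (a : Fin n) : Finset (Fin n) :=
  {b | ∀ p, s p = b → ∃ q, s q = a ∧ Nat.dist p q ≤ d}

lemma mem_enclosedSymbols_self (a : Fin n) : a ∈ enclosedSymbols s d a :=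
  mem_filter.mpr ⟨mem_univ a, fun p hp => ⟨p, hp, by simp⟩⟩

lemma IsDoubleString.exists_eq_or_eq (hs : IsDoubleString n s) (p : Fin (2 * n)) :
    ∃ q, ∀ r, s r = s p → r = p ∨ r = q := by
  obtain ⟨x, y, -, hxy⟩ := card_eq_two.mp (hs (s p))
  have hmem : ∀ r, s r = s p → r = x ∨ r = y := fun r hr => by
    have hr : r ∈ ({r | s r = s p} : Finset _) := mem_filter.mpr ⟨mem_univ r, hr⟩
    simpa [hxy] using hr
  rcases hmem p rfl with rfl | rfl
  · exact ⟨y, hmem⟩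
  · exact ⟨x, fun r hr => (hmem r hr).symm⟩

lemma add_card_enclosedSymbols_le (hs : IsDoubleString n s) (hd : DiamLE n d s) (a : Fin n) :
    n + #(enclosedSymbols s d a) ≤ #(occNbhd s d a) := by
  have hcover : ∀ b, ∃ r ∈ occNbhd s d a, s r = b := by
    intro b
    by_cases hba : b = a
    · subst hba
      obtain ⟨r, hr⟩ := card_pos.mp (by rw [hs b]; omega : 0 < #{r | s r = b})
      have hr : s r = b := (mem_filter.mp hr).2
      exact ⟨r, mem_filter.mpr ⟨mem_univ r, r, hr, by simp⟩, hr⟩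
    · obtain ⟨u, v, hu, hv, huv⟩ := hd b a hba
      exact ⟨u, by simp only [occNbhd, mem_filter_univ]; exact ⟨v, hv, huv⟩, hu⟩
  have htwo : ∀ b ∈ enclosedSymbols s d a, 2 ≤ #{r ∈ occNbhd s d a | s r = b} := by
    intro b hb
    refine (hs b).symm.le.trans (card_le_card fun r hr => ?_)
    simp only [enclosedSymbols, mem_filter_univ] at hb hr
    simpa [occNbhd, hr] using hb r hr
  simpa using card_add_card_le_of_cover s _ _ hcover htwo

lemma occNbhd_subset {a : Fin n} {p q : Fin (2 * n)} (hocc : ∀ r, s r = a → r = p ∨ r = q) :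
    occNbhd s d a ⊆ posBall (2 * n) p d ∪ posBall (2 * n) q d := by
  intro r hr
  obtain ⟨q', hq', hrq'⟩ := mem_filter_univ r |>.mp hr
  rcases hocc q' hq' with rfl | rfl <;> simp [posBall, hrq']

/-- The distinctness lemma: two equal symbols among the first `d + 1` positions would leave
only `2d + 1` positions within distance `d` of them, too few to meet all `n` symbols. -/
lemma eq_of_apply_eq_of_le (hs : IsDoubleString n s) (hd : DiamLE n d s) (hdn : 2 * d < n)
    {p q : Fin (2 * n)} (hp : p.val ≤ d) (hq : q.val ≤ d) (hpq : s p = s q) : p = q := by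
  by_contra hne
  have hocc : ∀ r, s r = s p → r = p ∨ r = q := by
    obtain ⟨q', hq'⟩ := hs.exists_eq_or_eq p
    obtain rfl : q = q' := (hq' q hpq.symm).resolve_left (Ne.symm hne)
    exact hq'
  have hsub : occNbhd s d (s p) ⊆ posBall (2 * n) d d := by
    intro r hr
    have := occNbhd_subset hocc hr
    simp only [posBall, mem_union, mem_filter_univ] at this ⊢
    unfold Nat.dist at this ⊢
    omega
  have hlow := add_card_enclosedSymbols_le hs hd (s p)
  have hself : 0 < #(enclosedSymbols s d (s p)) := card_pos.mpr ⟨_, mem_enclosedSymbols_self _⟩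
  have hup := (card_le_card hsub).trans (card_posBall_le (2 * n) d d)
  omega

lemma val_le_firstOcc (horder : ∀ a b : Fin n, a < b → firstOcc n s a < firstOcc n s b) :
    ∀ a : Fin n, a.val ≤ firstOcc n s a
  | ⟨0, _⟩ => Nat.zero_le _
  | ⟨k + 1, hk⟩ =>
    (val_le_firstOcc horder ⟨k, by omega⟩).trans_lt (horder _ _ (Fin.mk_lt_mk.mpr k.lt_succ_self))

lemma firstOcc_apply_le (p : Fin (2 * n)) : firstOcc n s (s p) ≤ p.val :=
  Nat.sInf_le ⟨p.isLt, rfl⟩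

lemma val_apply_of_le (hs : IsDoubleString n s) (hd : DiamLE n d s) (hdn : 2 * d < n)
    (horder : ∀ a b : Fin n, a < b → firstOcc n s a < firstOcc n s b)
    {p : Fin (2 * n)} (hp : p.val ≤ d) : (s p).val = p.val := by
  obtain ⟨k, hk⟩ := p
  dsimp only at hp ⊢
  induction k using Nat.strong_induction_on with
  | _ k ih =>
    set m := (s ⟨k, hk⟩).val
    have hmk : m ≤ k := (val_le_firstOcc horder _).trans (firstOcc_apply_le _)
    by_contra hne
    have hsm : s ⟨m, by omega⟩ = s ⟨k, hk⟩ := Fin.ext (ih m (by omega) _ (by omega))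
    have := eq_of_apply_eq_of_le hs hd hdn (p := ⟨m, _⟩) (by dsimp only; omega) hp hsm
    exact hne (Fin.mk.inj this)

end DoubleString

/-- Lemma 4 of the paper.  Let `S` be a double-`n` string with diameter `d`,
`d < n/2`, whose symbols are labeled by order of first occurrence.  For a
symbol `i` among the first `d+1` (i.e. with 1-based label `i.val + 1 ≤ d + 1`),
let `rᵢ` be the number of symbols `j ≠ i` both of whose occurrences are within
distance `d` of some occurrence of `i`.  Then `rᵢ ≤ 3d + (i.val + 1) - n`,
stated without natural subtraction as `rᵢ + n ≤ 3d + i.val + 1`. -/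
theorem repeats_bound (n d : ℕ) (s : Fin (2 * n) → Fin n)
    (hs : IsDoubleString n s) (hd : DiamLE n d s) (hdn : 2 * d < n)
    (horder : ∀ a b : Fin n, a < b → firstOcc n s a < firstOcc n s b)
    (i : Fin n) (hi : i.val ≤ d) :
    Nat.card {j : Fin n // j ≠ i ∧ ∀ p : Fin (2 * n), s p = j →
        ∃ q : Fin (2 * n), s q = i ∧ Nat.dist p.val q.val ≤ d} + n
      ≤ 3 * d + i.val + 1 := by
  obtain ⟨p, hpi⟩ : ∃ p : Fin (2 * n), p.val = i.val := ⟨⟨i.val, by omega⟩, rfl⟩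
  have hp : s p = i := Fin.ext ((val_apply_of_le hs hd hdn horder (hpi ▸ hi)).trans hpi)
  obtain ⟨q, hocc⟩ := hs.exists_eq_or_eq p
  rw [hp] at hocc
  have hcard : Nat.card {j : Fin n // j ≠ i ∧ ∀ p : Fin (2 * n), s p = j →
      ∃ q : Fin (2 * n), s q = i ∧ Nat.dist p.val q.val ≤ d} + 1 = #(enclosedSymbols s d i) := by
    rw [Nat.card_eq_fintype_card, Fintype.card_subtype,
      ← card_erase_add_one (mem_enclosedSymbols_self i)]
    congr 2
    ext j
    simp [enclosedSymbols]
  have hlow := add_card_enclosedSymbols_le hs hd i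
  have hup := (card_le_card (occNbhd_subset (d := d) hocc)).trans (card_union_le _ _)
  have hball_p := card_posBall_le (2 * n) p d
  have hball_q := card_posBall_le (2 * n) q d
  omega
end

section
/- Let S be a double-n string with diameter d < n/2, and let 1 ≤ i ≤ d+1. Then at most 3d + i - n of the symbols in {1, 2, ..., d+1} \ {i} have an occurrence within distance d of the second occurrence of i. -/
/-- The position of the second (last) occurrence of the symbol `a` in `s`. -/
noncomputable def secondOcc (n : ℕ) (s : Fin (2 * n) → Fin n) (a : Fin n) : ℕ :=
  sSup {i | ∃ h : i < 2 * n, s ⟨i, h⟩ = a}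

/-!
Because `2d < n`, no symbol occurs twice among the first `d + 1` positions: otherwise every
symbol would lie within distance `d` of that repeated pair, so all `n` symbols would occupy at
most `2d` positions. As labels follow first occurrences, symbol `j ≤ d` sits at position `j`.
By the diameter bound every symbol lies within distance `d` of one of the two occurrences of `i`,
so the symbols `A` near the second occurrence (at most `2d + 1`) and `B` near position `i`
(at most `i + d + 1`) cover all `n` symbols, while `A ∩ B` contains `i` and every counted symbol.
Inclusion–exclusion gives `count + 1 + n ≤ |A| + |B| ≤ 3d + i + 2`.
-/

open Finset

theorem Fin.val_le_of_strictMono {n : ℕ} {f : Fin n → ℕ} (hf : StrictMono f) (a : Fin n) :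
    a.val ≤ f a := by
  have h := card_le_card_of_injOn f (s := Iic a) (t := range (f a + 1))
    (fun b hb => by simpa [Nat.lt_succ_iff] using hf.monotone (mem_Iic.mp hb))
    hf.injective.injOn
  simpa using h

section Occurrences

variable {n : ℕ} {s : Fin (2 * n) → Fin n}

lemma setOf_occ_nonempty (hs : IsDoubleString n s) (a : Fin n) :
    {i | ∃ h : i < 2 * n, s ⟨i, h⟩ = a}.Nonempty := by
  have : 0 < #(univ.filter fun i => s i = a) := by rw [hs a]; norm_num
  obtain ⟨p, hp⟩ := card_pos.mp this
  exact ⟨p, p.isLt, (mem_filter.mp hp).2⟩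

lemma firstOcc_le {a : Fin n} {p : Fin (2 * n)} (hp : s p = a) : firstOcc n s a ≤ p :=
  Nat.sInf_le ⟨p.isLt, hp⟩

lemma le_secondOcc {a : Fin n} {p : Fin (2 * n)} (hp : s p = a) : p.val ≤ secondOcc n s a :=
  le_csSup ⟨2 * n, fun _ ⟨h, _⟩ => h.le⟩ ⟨p.isLt, hp⟩

lemma firstOcc_mem (hs : IsDoubleString n s) (a : Fin n) :
    ∃ h : firstOcc n s a < 2 * n, s ⟨firstOcc n s a, h⟩ = a :=
  Nat.sInf_mem (setOf_occ_nonempty hs a)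

lemma secondOcc_mem (hs : IsDoubleString n s) (a : Fin n) :
    ∃ h : secondOcc n s a < 2 * n, s ⟨secondOcc n s a, h⟩ = a :=
  Nat.sSup_mem (setOf_occ_nonempty hs a) ⟨2 * n, fun _ ⟨h, _⟩ => h.le⟩

lemma firstOcc_lt_secondOcc (hs : IsDoubleString n s) (a : Fin n) :
    firstOcc n s a < secondOcc n s a := by
  obtain ⟨p, q, hpq, hpq'⟩ := card_eq_two.mp (hs a)
  have hocc : ∀ x ∈ ({p, q} : Finset _), s x = a := fun x hx => by
    rw [← hpq'] at hx; exact (mem_filter.mp hx).2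
  have hp := hocc p (by simp)
  have hq := hocc q (by simp)
  have := Fin.val_ne_of_ne hpq
  have := firstOcc_le hp; have := firstOcc_le hq
  have := le_secondOcc hp; have := le_secondOcc hq
  omega

lemma occ_eq_firstOcc_or_secondOcc (hs : IsDoubleString n s) {a : Fin n} {r : Fin (2 * n)}
    (hr : s r = a) : r.val = firstOcc n s a ∨ r.val = secondOcc n s a := by
  by_contra! hne
  obtain ⟨h₁, hp₁⟩ := firstOcc_mem hs a
  obtain ⟨h₂, hp₂⟩ := secondOcc_mem hs a
  have hlt := firstOcc_lt_secondOcc hs a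
  have : 2 < #(univ.filter fun i => s i = a) :=
    two_lt_card_iff.mpr ⟨⟨_, h₁⟩, ⟨_, h₂⟩, r, by simpa using hp₁, by simpa using hp₂,
      by simpa using hr, by simp [Fin.ext_iff]; omega, by simp [Fin.ext_iff]; omega,
      by simp [Fin.ext_iff]; omega⟩
  exact this.ne' (hs a)

end Occurrences

lemma card_add_card_univ_le {α : Type*} [Fintype α] [DecidableEq α] {s t u : Finset α}
    (hcover : s ∪ t = univ) (hu : u ⊆ s ∩ t) : #u + Fintype.card α ≤ #s + #t := by
  calc #u + Fintype.card α = #u + #(s ∪ t) := by rw [hcover, card_univ]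
    _ ≤ #(s ∩ t) + #(s ∪ t) := by gcongr
    _ = #s + #t := card_inter_add_card_union s t

def window (n c d : ℕ) : Finset (Fin (2 * n)) := univ.filter fun p => Nat.dist p c ≤ d

@[simp]
lemma mem_window {n c d : ℕ} {p : Fin (2 * n)} : p ∈ window n c d ↔ Nat.dist p c ≤ d := by
  simp [window]

lemma card_window_le (n c d : ℕ) : #(window n c d) ≤ c + d + 1 - (c - d) := by
  calc #(window n c d) ≤ #(Icc (c - d) (c + d)) :=
        card_le_card_of_injOn Fin.val
          (fun p hp => by
            have := (mem_filter.mp (mem_coe.mp hp)).2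
            rw [mem_coe, mem_Icc]; unfold Nat.dist at this; omega) Fin.val_injective.injOn
    _ = c + d + 1 - (c - d) := Nat.card_Icc _ _

section Diameter

variable {n d : ℕ} {s : Fin (2 * n) → Fin n}

lemma lt_secondOcc (hs : IsDoubleString n s) (hd : DiamLE n d s) (hdn : 2 * d < n)
    (b : Fin n) : d < secondOcc n s b := by
  by_contra! hb
  obtain ⟨h₁, hp₁⟩ := firstOcc_mem hs b
  obtain ⟨h₂, hp₂⟩ := secondOcc_mem hs b
  have hlt := firstOcc_lt_secondOcc hs b
  have hcover : univ ⊆ ((window n 0 (2 * d)).erase ⟨_, h₂⟩).image s := by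
    intro c _
    rw [mem_image]
    by_cases hc : c = b
    · refine ⟨⟨_, h₁⟩, ?_, hc ▸ hp₁⟩
      simp only [mem_erase, mem_window, ne_eq, Fin.ext_iff, Nat.dist]
      omega
    · obtain ⟨p, q, hpc, hqb, hpq⟩ := hd c b hc
      have := le_secondOcc hqb
      have hne : p ≠ ⟨_, h₂⟩ := fun h => hc (by rw [← hpc, h, hp₂])
      refine ⟨p, ?_, hpc⟩
      simp only [mem_erase, mem_window, ne_eq, hne, not_false_eq_true, true_and]
      unfold Nat.dist at hpq ⊢
      omega
  have hcard := (card_le_card hcover).trans card_image_le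
  rw [card_univ, Fintype.card_fin, card_erase_of_mem (by simp [Nat.dist]; omega)] at hcard
  have := card_window_le n 0 (2 * d)
  omega

lemma firstOcc_eq_val (hs : IsDoubleString n s) (hd : DiamLE n d s) (hdn : 2 * d < n)
    (hmono : StrictMono (firstOcc n s)) {a : Fin n} (ha : a.val ≤ d) :
    firstOcc n s a = a := by
  induction a using WellFoundedLT.induction with
  | _ a ih =>
    have hm : a.val < 2 * n := by omega
    set b := s ⟨a, hm⟩ with hb
    have hfb : firstOcc n s b ≤ a := firstOcc_le hb.symm
    have hbf := Fin.val_le_of_strictMono hmono b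
    obtain hba | hba := (show b ≤ a by rw [Fin.le_def]; omega).lt_or_eq
    · have hfirst : firstOcc n s b = b := ih b hba (by rw [Fin.lt_def] at hba; omega)
      have := lt_secondOcc hs hd hdn b
      rw [Fin.lt_def] at hba
      rcases occ_eq_firstOcc_or_secondOcc hs hb.symm with h | h <;> simp only at h <;> omega
    · rw [hba] at hfb hbf
      omega

lemma image_window_firstOcc_union_secondOcc (hs : IsDoubleString n s) (hd : DiamLE n d s)
    (a : Fin n) :
    (window n (firstOcc n s a) d).image s ∪ (window n (secondOcc n s a) d).image s = univ := by
  refine eq_univ_of_forall fun c => ?_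
  by_cases hc : c = a
  · obtain ⟨h, hp⟩ := secondOcc_mem hs a
    exact mem_union_right _ (mem_image.mpr ⟨⟨_, h⟩, by simp, hc ▸ hp⟩)
  · obtain ⟨p, q, hpc, hqa, hpq⟩ := hd c a hc
    rw [mem_union, mem_image, mem_image]
    rcases occ_eq_firstOcc_or_secondOcc hs hqa with hq | hq
    · exact .inl ⟨p, mem_window.mpr (hq ▸ hpq), hpc⟩
    · exact .inr ⟨p, mem_window.mpr (hq ▸ hpq), hpc⟩

lemma mem_image_window_of_le (hs : IsDoubleString n s) (hd : DiamLE n d s) (hdn : 2 * d < n)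
    (hmono : StrictMono (firstOcc n s)) {c : ℕ} {j : Fin n} (hc : c ≤ d) (hj : j.val ≤ d) :
    j ∈ (window n c d).image s := by
  obtain ⟨h, hp⟩ := firstOcc_mem hs j
  refine mem_image.mpr ⟨⟨_, h⟩, ?_, hp⟩
  rw [mem_window, Fin.val_mk, firstOcc_eq_val hs hd hdn hmono hj, Nat.dist]
  omega

end Diameter

/-- Corollary 5 of the paper.  Let `S` be a double-`n` string with diameter
`d < n/2`, symbols labeled by order of first occurrence, and let `i` be among
the first `d+1` symbols (1-based label `i.val + 1 ≤ d + 1`).  Then at most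
`3d + (i.val + 1) - n` of the symbols `j ≠ i` among the first `d+1` have an
occurrence within distance `d` of the second occurrence of `i` (stated without
natural subtraction as `count + n ≤ 3d + i.val + 1`). -/
theorem near_second_occurrence_bound (n d : ℕ) (s : Fin (2 * n) → Fin n)
    (hs : IsDoubleString n s) (hd : DiamLE n d s) (hdn : 2 * d < n)
    (horder : ∀ a b : Fin n, a < b → firstOcc n s a < firstOcc n s b)
    (i : Fin n) (hi : i.val ≤ d) :
    Nat.card {j : Fin n // j ≠ i ∧ j.val ≤ d ∧ ∃ p : Fin (2 * n), s p = j ∧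
        Nat.dist p.val (secondOcc n s i) ≤ d} + n
      ≤ 3 * d + i.val + 1 := by
  classical
  have hmono : StrictMono (firstOcc n s) := fun a b h => horder a b h
  set A := (window n (secondOcc n s i) d).image s
  set B := (window n i d).image s
  set P := univ.filter fun j : Fin n => j ≠ i ∧ j.val ≤ d ∧
    ∃ p : Fin (2 * n), s p = j ∧ Nat.dist p.val (secondOcc n s i) ≤ d
  have hA : ∀ j : Fin n, (∃ p : Fin (2 * n), s p = j ∧ Nat.dist p (secondOcc n s i) ≤ d) →
      j ∈ A := fun j ⟨p, hp, hdist⟩ => mem_image.mpr ⟨p, mem_window.mpr hdist, hp⟩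
  have hcover : B ∪ A = univ := by
    simpa only [firstOcc_eq_val hs hd hdn hmono hi] using
      image_window_firstOcc_union_secondOcc hs hd i
  have hsub : insert i P ⊆ B ∩ A := by
    obtain ⟨h, hp⟩ := secondOcc_mem hs i
    refine insert_subset (mem_inter.mpr ⟨mem_image_window_of_le hs hd hdn hmono hi hi,
      hA i ⟨⟨_, h⟩, hp, by simp⟩⟩) fun j hj => ?_
    obtain ⟨-, hjd, hjA⟩ := (mem_filter.mp hj).2
    exact mem_inter.mpr ⟨mem_image_window_of_le hs hd hdn hmono hi hjd, hA j hjA⟩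
  have hcard := card_add_card_univ_le hcover hsub
  rw [card_insert_of_notMem (by simp [P]), Fintype.card_fin] at hcard
  have hAcard : #A ≤ 2 * d + 1 := card_image_le.trans ((card_window_le n _ d).trans (by omega))
  have hBcard : #B ≤ i + d + 1 := card_image_le.trans ((card_window_le n _ d).trans (by omega))
  calc _ = #P + n := by rw [Nat.card_eq_fintype_card, Fintype.card_subtype]
    _ ≤ 3 * d + i.val + 1 := by omega
end

section
/- Let S be a pairwise-intersecting double-interval society with n voters and approval number a = a(S), with all interval endpoints distinct. Then (4n - a)(a - 1) ≥ n(n - 1). -/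
/-- The approval set of voter `v`: the union of the voter's two closed
intervals `[A₁ v, B₁ v]` and `[A₂ v, B₂ v]`. -/
def approvalSet (A₁ B₁ A₂ B₂ : ℝ) : Set ℝ :=
  Set.Icc A₁ B₁ ∪ Set.Icc A₂ B₂

/-!
Record every interval of every voter by its left endpoint. If two distinct voters share a
point, then of their two intervals through that point the one starting later has its left
endpoint in the other. So the `n(n-1)/2` pairs of voters are at most `∑ c(I)`, where `c(I)`
counts the coverers of `I`: the voters other than the owner of `I` who approve its left
endpoint. Now `c(I) ≤ a - 1`, and `c(I)` is at most the number of intervals starting before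
`I`, since left endpoints are distinct and each coverer owns an interval starting no later.
Listing the `2n` intervals by left endpoint,
`∑ c(I) ≤ ∑_{k < 2n} min(a - 1, k) = (4n - a)(a - 1)/2`.
-/

open Finset Function

section Rank

variable {ι α M : Type*} [Fintype ι] [LinearOrder α] {L : ι → α}

lemma card_filter_lt_lt_card_filter_lt {i j : ι} (h : L i < L j) :
    #{k | L k < L i} < #{k | L k < L j} := by
  refine card_lt_card ((ssubset_iff_of_subset fun k hk => ?_).2 ⟨i, ?_, ?_⟩)
  · simp only [mem_filter, mem_univ, true_and] at hk ⊢
    exact hk.trans h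
  · simpa using h
  · simp

lemma injective_card_filter_lt (hL : Injective L) : Injective fun i => #{k | L k < L i} := by
  intro i j hij
  rcases lt_trichotomy (L i) (L j) with h | h | h
  · exact absurd hij (card_filter_lt_lt_card_filter_lt h).ne
  · exact hL h
  · exact absurd hij (card_filter_lt_lt_card_filter_lt h).ne'

lemma sum_card_filter_lt_eq_sum_range [AddCommMonoid M] (hL : Injective L) (g : ℕ → M) :
    ∑ i, g #{k | L k < L i} = ∑ k ∈ range (Fintype.card ι), g k := by
  have himage : univ.image (fun i => #{k | L k < L i}) = range (Fintype.card ι) := by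
    refine eq_of_subset_of_card_le (fun r hr => ?_) ?_
    · obtain ⟨i, -, rfl⟩ := mem_image.1 hr
      exact mem_range.2 (card_lt_card (filter_ssubset.2 ⟨i, mem_univ _, lt_irrefl _⟩))
    · rw [card_image_of_injective _ (injective_card_filter_lt hL), card_range, card_univ]
  rw [← himage, sum_image fun i _ j _ h => injective_card_filter_lt hL h]

end Rank

lemma two_mul_sum_range_min_add {c m : ℕ} (h : c < m) :
    2 * ∑ k ∈ range m, min c k + c * (c + 1) = 2 * m * c := by
  induction m, h using Nat.le_induction with
  | base =>
    rw [sum_congr rfl fun k hk => min_eq_right (Nat.lt_succ_iff.1 (mem_range.1 hk)),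
      mul_comm, sum_range_id_mul_two]
    simp only [Nat.succ_eq_add_one, Nat.add_sub_cancel]
    ring
  | succ m hm ih =>
    rw [sum_range_succ, min_eq_left (by omega : c ≤ m)]
    linarith

namespace IntervalSociety

variable {V ι α : Type*} [LinearOrder α] (owner : ι → V) (L R : ι → α)

def Approves (v : V) (p : α) : Prop :=
  ∃ i, owner i = v ∧ p ∈ Set.Icc (L i) (R i)

open Classical in
noncomputable def coverers [Fintype V] (i : ι) : Finset V :=
  {u | u ≠ owner i ∧ Approves owner L R u (L i)}

variable {owner L R} [Fintype V]

lemma mem_coverers {i : ι} {u : V} :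
    u ∈ coverers owner L R i ↔ u ≠ owner i ∧ Approves owner L R u (L i) := by
  simp [coverers]

lemma card_coverers_add_one_le (hLR : ∀ i, L i ≤ R i) {a : ℕ}
    (hub : ∀ p, Nat.card {v // Approves owner L R v p} ≤ a) (i : ι) :
    #(coverers owner L R i) + 1 ≤ a := by
  classical
  calc #(coverers owner L R i) + 1 = #(insert (owner i) (coverers owner L R i)) :=
        (card_insert_of_notMem (by simp [mem_coverers])).symm
    _ ≤ #{v | Approves owner L R v (L i)} := by
        refine card_le_card fun u hu => ?_
        rcases mem_insert.1 hu with rfl | hu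
        · simpa using ⟨i, rfl, le_rfl, hLR i⟩
        · simpa using (mem_coverers.1 hu).2
    _ = Nat.card {v // Approves owner L R v (L i)} := by
        rw [Nat.card_eq_fintype_card, Fintype.card_subtype]
    _ ≤ a := hub _

lemma card_coverers_le_card_filter_lt [Fintype ι] (hL : Injective L) (i : ι) :
    #(coverers owner L R i) ≤ #{j | L j < L i} := by
  classical
  refine (card_le_card fun u hu => ?_).trans (card_image_le (f := owner))
  obtain ⟨hne, j, rfl, hj, -⟩ := mem_coverers.1 hu
  exact mem_image.2 ⟨j, by simpa using hj.lt_of_ne fun h => hne (congrArg owner (hL h)), rfl⟩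

lemma mem_coverers_or_mem_coverers {u v : V} {p : α} (huv : u ≠ v)
    (hu : Approves owner L R u p) (hv : Approves owner L R v p) :
    (∃ j, owner j = v ∧ u ∈ coverers owner L R j) ∨
      ∃ i, owner i = u ∧ v ∈ coverers owner L R i := by
  obtain ⟨i, rfl, hi⟩ := hu
  obtain ⟨j, rfl, hj⟩ := hv
  rcases le_total (L i) (L j) with h | h
  · exact .inl ⟨j, rfl, mem_coverers.2 ⟨huv, i, rfl, h, hj.1.trans hi.2⟩⟩
  · exact .inr ⟨i, rfl, mem_coverers.2 ⟨huv.symm, j, rfl, h, hi.1.trans hj.2⟩⟩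

lemma card_offDiag_le_two_mul_sum_card_coverers [Fintype ι] [DecidableEq V]
    (hpair : ∀ u v, u ≠ v → ∃ p, Approves owner L R u p ∧ Approves owner L R v p) :
    #(univ : Finset V).offDiag ≤ 2 * ∑ i, #(coverers owner L R i) := by
  set T := univ.sigma (coverers owner L R)
  have hsub : (univ : Finset V).offDiag ⊆
      T.image (fun x => (x.2, owner x.1)) ∪ T.image (fun x => (owner x.1, x.2)) := by
    rintro ⟨u, v⟩ huv
    have huv : u ≠ v := (mem_offDiag.1 huv).2.2
    obtain ⟨p, hu, hv⟩ := hpair u v huv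
    rcases mem_coverers_or_mem_coverers huv hu hv with ⟨j, rfl, hj⟩ | ⟨i, rfl, hi⟩
    · exact mem_union_left _ (mem_image.2 ⟨⟨j, u⟩, mem_sigma.2 ⟨mem_univ _, hj⟩, rfl⟩)
    · exact mem_union_right _ (mem_image.2 ⟨⟨i, v⟩, mem_sigma.2 ⟨mem_univ _, hi⟩, rfl⟩)
  calc #(univ : Finset V).offDiag ≤ #T + #T := (card_le_card hsub).trans <|
        (card_union_le _ _).trans (add_le_add card_image_le card_image_le)
    _ = 2 * ∑ i, #(coverers owner L R i) := by rw [card_sigma, two_mul]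

theorem card_mul_card_sub_one_le [Fintype ι] [Nonempty ι] (hLR : ∀ i, L i ≤ R i)
    (hL : Injective L) {a : ℕ}
    (hpair : ∀ u v, u ≠ v → ∃ p, Approves owner L R u p ∧ Approves owner L R v p)
    (hub : ∀ p, Nat.card {v // Approves owner L R v p} ≤ a) (ha : a ≤ Fintype.card ι) :
    (Fintype.card V : ℤ) * (Fintype.card V - 1) ≤ (2 * Fintype.card ι - a) * (a - 1) := by
  classical
  have ha_pos : 1 ≤ a := by
    obtain ⟨i⟩ := ‹Nonempty ι›
    have := card_coverers_add_one_le hLR hub i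
    omega
  have hcov (i : ι) : #(coverers owner L R i) ≤ min (a - 1) #{j | L j < L i} :=
    le_min (Nat.le_sub_of_add_le (card_coverers_add_one_le hLR hub i))
      (card_coverers_le_card_filter_lt hL i)
  have hcount : Fintype.card V * Fintype.card V - Fintype.card V + (a - 1) * a ≤
      2 * Fintype.card ι * (a - 1) := calc
    _ ≤ 2 * ∑ i, #(coverers owner L R i) + (a - 1) * a := by
        rw [← card_univ, ← offDiag_card]
        gcongr
        exact card_offDiag_le_two_mul_sum_card_coverers hpair
    _ ≤ 2 * ∑ k ∈ range (Fintype.card ι), min (a - 1) k + (a - 1) * (a - 1 + 1) := by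
        rw [← sum_card_filter_lt_eq_sum_range hL, Nat.sub_add_cancel ha_pos]
        gcongr with i
        exact hcov i
    _ = 2 * Fintype.card ι * (a - 1) := two_mul_sum_range_min_add (by omega)
  zify [Nat.le_mul_self (Fintype.card V), ha_pos] at hcount
  linarith

end IntervalSociety

theorem society_quadratic_bound_general (n a : ℕ)
    (A₁ B₁ A₂ B₂ : Fin n → ℝ)
    (h₁ : ∀ v, A₁ v ≤ B₁ v) (h₃ : ∀ v, A₂ v ≤ B₂ v)
    (hdistinct : Function.Injective (fun x : Fin n × Fin 4 =>
      if x.2 = 0 then A₁ x.1 else if x.2 = 1 then B₁ x.1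
      else if x.2 = 2 then A₂ x.1 else B₂ x.1))
    (hpair : ∀ u v : Fin n, ∃ p : ℝ,
      p ∈ approvalSet (A₁ u) (B₁ u) (A₂ u) (B₂ u) ∧
      p ∈ approvalSet (A₁ v) (B₁ v) (A₂ v) (B₂ v))
    (hub : ∀ p : ℝ,
      Nat.card {v : Fin n // p ∈ approvalSet (A₁ v) (B₁ v) (A₂ v) (B₂ v)} ≤ a)
    (hmax : ∃ p : ℝ,
      Nat.card {v : Fin n // p ∈ approvalSet (A₁ v) (B₁ v) (A₂ v) (B₂ v)} = a) :
    (4 * (n : ℤ) - a) * ((a : ℤ) - 1) ≥ (n : ℤ) * ((n : ℤ) - 1) := by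
  obtain rfl | hn := Nat.eq_zero_or_pos n
  · obtain ⟨p, rfl⟩ := hmax
    simp
  have : Nonempty (Fin n) := ⟨⟨0, hn⟩⟩
  let L : Fin n × Bool → ℝ := fun i => bif i.2 then A₂ i.1 else A₁ i.1
  let R : Fin n × Bool → ℝ := fun i => bif i.2 then B₂ i.1 else B₁ i.1
  have happ (v : Fin n) (p : ℝ) :
      p ∈ approvalSet (A₁ v) (B₁ v) (A₂ v) (B₂ v) ↔
        IntervalSociety.Approves Prod.fst L R v p := by
    simp [approvalSet, IntervalSociety.Approves, L, R]
  have hL : Injective L := by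
    rintro ⟨v, b⟩ ⟨w, c⟩ h
    have hdist := @hdistinct (v, bif b then 2 else 0) (w, bif c then 2 else 0)
    cases b <;> cases c <;> simp_all [L]
  simp only [happ] at hpair hub hmax
  have ha : a ≤ Fintype.card (Fin n × Bool) := by
    obtain ⟨p, rfl⟩ := hmax
    exact (Finite.card_subtype_le _).trans (by
      simp only [Nat.card_eq_fintype_card, Fintype.card_prod, Fintype.card_fin,
        Fintype.card_bool]
      omega)
  have hbound := IntervalSociety.card_mul_card_sub_one_le
    (by rintro ⟨v, _ | _⟩; exacts [h₁ v, h₃ v]) hL (fun u v _ => hpair u v) hub ha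
  simp only [Fintype.card_prod, Fintype.card_fin, Fintype.card_bool] at hbound
  push_cast at hbound
  linarith

/-- Let `S` be a pairwise-intersecting double-interval society with `n` voters
(voter `v` approving the two disjoint closed intervals `[A₁ v, B₁ v]` and
`[A₂ v, B₂ v]`), all `4n` endpoints distinct, with approval number `a`.
Then `(4n - a)(a - 1) ≥ n(n - 1)`. -/
theorem society_quadratic_bound (n a : ℕ)
    (A₁ B₁ A₂ B₂ : Fin n → ℝ)
    (h₁ : ∀ v, A₁ v ≤ B₁ v) (h₂ : ∀ v, B₁ v < A₂ v) (h₃ : ∀ v, A₂ v ≤ B₂ v)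
    (hdistinct : Function.Injective (fun x : Fin n × Fin 4 =>
      if x.2 = 0 then A₁ x.1 else if x.2 = 1 then B₁ x.1
      else if x.2 = 2 then A₂ x.1 else B₂ x.1))
    (hpair : ∀ u v : Fin n, ∃ p : ℝ,
      p ∈ approvalSet (A₁ u) (B₁ u) (A₂ u) (B₂ u) ∧
      p ∈ approvalSet (A₁ v) (B₁ v) (A₂ v) (B₂ v))
    (hub : ∀ p : ℝ,
      Nat.card {v : Fin n // p ∈ approvalSet (A₁ v) (B₁ v) (A₂ v) (B₂ v)} ≤ a)
    (hmax : ∃ p : ℝ,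
      Nat.card {v : Fin n // p ∈ approvalSet (A₁ v) (B₁ v) (A₂ v) (B₂ v)} = a) :
    (4 * (n : ℤ) - a) * ((a : ℤ) - 1) ≥ (n : ℤ) * ((n : ℤ) - 1) :=
  society_quadratic_bound_general n a A₁ B₁ A₂ B₂ h₁ h₃ hdistinct hpair hub hmax
end

section
/- Let S be a pairwise-intersecting double-interval society with n voters and approval number a(S), with all interval endpoints distinct. Then a(S) ≥ ⌈2n + 1/2 − √(3n² − n + 1/4)⌉. -/
/-! Call a left endpoint of one of a voter's intervals a *left endpoint* of that voter. If two
closed intervals meet, the larger of their left endpoints lies in both; hence for any two voters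
some left endpoint of one is approved by the other, and the `n(n-1)/2` pairs of voters are covered
by the pairs (left endpoint `e`, voter other than its owner approving `e`). Every voter approving a
point `p` has a left endpoint `≤ p`, so the `k`-th smallest of the `2n` left endpoints is approved
by at most `min(a, k)` voters. Summing, `n(n-1)/2 + 2n ≤ ∑_{k ≤ 2n} min(a, k) = 2na - a(a-1)/2`,
which is `(4n - a)(a - 1) ≥ n(n - 1)`; solving this quadratic inequality for `a` gives the bound. -/

open Finset Function

theorem two_mul_sum_Icc_id (N : ℕ) : 2 * ∑ k ∈ Icc 1 N, k = N * (N + 1) := by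
  induction N with
  | zero => simp
  | succ N ih => rw [sum_Icc_succ_top (by omega), mul_add, ih]; ring

theorem two_mul_sum_Icc_min_add {a N : ℕ} (h : a ≤ N) :
    2 * ∑ k ∈ Icc 1 N, min a k + a * a = 2 * N * a + a := by
  induction N, h using Nat.le_induction with
  | base =>
    rw [sum_congr rfl fun k hk => min_eq_right (mem_Icc.1 hk).2, two_mul_sum_Icc_id]
    ring
  | succ N hN ih =>
    rw [sum_Icc_succ_top (by omega), min_eq_left (by omega)]
    linarith

theorem two_mul_add_half_sub_sqrt_le {n x : ℝ} (h : n ^ 2 + 3 * n + x ^ 2 ≤ 4 * n * x + x) :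
    2 * n + 1 / 2 - √(3 * n ^ 2 - n + 1 / 4) ≤ x := by
  have := Real.abs_le_sqrt (x := 2 * n + 1 / 2 - x) (y := 3 * n ^ 2 - n + 1 / 4) (by nlinarith)
  linarith [le_abs_self (2 * n + 1 / 2 - x)]

theorem sum_card_filter_le_eq_sum_Icc {ι α M : Type*} [Fintype ι] [LinearOrder α]
    [AddCommMonoid M] {f : ι → α} (hf : Injective f) (g : ℕ → M) :
    ∑ i, g #{j | f j ≤ f i} = ∑ k ∈ Icc 1 (Fintype.card ι), g k := by
  set rank : ι → ℕ := fun i => #{j | f j ≤ f i}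
  have rank_lt {i j : ι} (h : f i < f j) : rank i < rank j :=
    card_lt_card <| (ssubset_iff_of_subset fun k => by simpa using fun hk => hk.trans h.le).2
      ⟨j, by simp, by simpa using h⟩
  have rank_injective : Injective rank := fun i j h =>
    hf <| le_antisymm (not_lt.1 fun hlt => (rank_lt hlt).ne' h)
      (not_lt.1 fun hlt => (rank_lt hlt).ne h)
  have : univ.image rank = Icc 1 (Fintype.card ι) := by
    refine eq_of_subset_of_card_le (fun k hk => ?_) ?_
    · obtain ⟨i, -, rfl⟩ := mem_image.1 hk
      exact mem_Icc.2 ⟨card_pos.2 ⟨i, by simp⟩, card_filter_le _ _⟩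
    · simp [card_image_of_injective _ rank_injective]
  rw [← this, sum_image fun i _ j _ h => rank_injective h]

theorem left_mem_Icc_or_left_mem_Icc {α : Type*} [LinearOrder α] {a b c d p : α}
    (h₁ : p ∈ Set.Icc a b) (h₂ : p ∈ Set.Icc c d) : a ∈ Set.Icc c d ∨ c ∈ Set.Icc a b := by
  rcases le_total a c with h | h
  · exact Or.inr ⟨h, h₂.1.trans h₁.2⟩
  · exact Or.inl ⟨h, h₁.1.trans h₂.2⟩

section IntervalUnion

variable {α K : Type*} [LinearOrder α]

def intervalUnion (l r : K → α) : Set α := ⋃ i, Set.Icc (l i) (r i)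

theorem left_mem_intervalUnion {l r : K → α} {i : K} (h : l i ≤ r i) :
    l i ∈ intervalUnion l r :=
  Set.mem_iUnion.2 ⟨i, Set.left_mem_Icc.2 h⟩

theorem exists_left_le_of_mem_intervalUnion {l r : K → α} {p : α}
    (hp : p ∈ intervalUnion l r) : ∃ i, l i ≤ p := by
  obtain ⟨i, hi⟩ := Set.mem_iUnion.1 hp
  exact ⟨i, hi.1⟩

theorem exists_left_mem_intervalUnion_of_inter_nonempty {l r l' r' : K → α}
    (h : (intervalUnion l r ∩ intervalUnion l' r').Nonempty) :
    (∃ i, l i ∈ intervalUnion l' r') ∨ ∃ i, l' i ∈ intervalUnion l r := by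
  obtain ⟨p, hp, hp'⟩ := h
  obtain ⟨i, hi⟩ := Set.mem_iUnion.1 hp
  obtain ⟨j, hj⟩ := Set.mem_iUnion.1 hp'
  rcases left_mem_Icc_or_left_mem_Icc hi hj with h | h
  · exact Or.inl ⟨i, Set.mem_iUnion.2 ⟨j, h⟩⟩
  · exact Or.inr ⟨j, Set.mem_iUnion.2 ⟨i, h⟩⟩

end IntervalUnion

theorem approvalSet_eq_intervalUnion (a₁ b₁ a₂ b₂ : ℝ) :
    approvalSet a₁ b₁ a₂ b₂ = intervalUnion ![a₁, a₂] ![b₁, b₂] := by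
  ext p
  simp [approvalSet, intervalUnion, Fin.exists_fin_two]

section Counting

open Classical

variable {α V K : Type*} [LinearOrder α] [Fintype V] [Fintype K] {l r : V → K → α}

noncomputable def approvers (l r : V → K → α) (p : α) : Finset V :=
  univ.filter fun v => p ∈ intervalUnion (l v) (r v)

theorem card_approvers_le (p : α) : #(approvers l r p) ≤ #{ℓ : V × K | uncurry l ℓ ≤ p} := by
  refine (card_le_card fun v hv => ?_).trans (card_image_le (f := Prod.fst))
  obtain ⟨i, hi⟩ := exists_left_le_of_mem_intervalUnion (mem_filter.1 hv).2
  exact mem_image.2 ⟨(v, i), mem_filter.2 ⟨mem_univ _, hi⟩, rfl⟩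

theorem card_mul_pred_le_two_mul_sum_card_erase
    (hpair : ∀ u v, (intervalUnion (l u) (r u) ∩ intervalUnion (l v) (r v)).Nonempty) :
    Fintype.card V * (Fintype.card V - 1) ≤
      2 * ∑ ℓ : V × K, #((approvers l r (uncurry l ℓ)).erase ℓ.1) := by
  set P := (univ.sigma fun ℓ : V × K => (approvers l r (uncurry l ℓ)).erase ℓ.1).image
    fun y => (y.1.1, y.2)
  have hcover : (univ : Finset V).offDiag ⊆ P ∪ P.image Prod.swap := by
    rintro ⟨u, v⟩ huv
    have huv : u ≠ v := (mem_offDiag.1 huv).2.2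
    rcases exists_left_mem_intervalUnion_of_inter_nonempty (hpair u v) with ⟨i, hi⟩ | ⟨i, hi⟩
    · refine mem_union_left _ (mem_image.2 ⟨⟨(u, i), v⟩, ?_, rfl⟩)
      exact mem_sigma.2 ⟨mem_univ _, mem_erase.2 ⟨huv.symm, mem_filter.2 ⟨mem_univ _, hi⟩⟩⟩
    · refine mem_union_right _ (mem_image.2 ⟨(v, u), mem_image.2 ⟨⟨(v, i), u⟩, ?_, rfl⟩, rfl⟩)
      exact mem_sigma.2 ⟨mem_univ _, mem_erase.2 ⟨huv, mem_filter.2 ⟨mem_univ _, hi⟩⟩⟩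
  calc Fintype.card V * (Fintype.card V - 1) = #(univ : Finset V).offDiag := by
        simp [offDiag_card, Nat.mul_sub_one]
    _ ≤ #P + #(P.image Prod.swap) := (card_le_card hcover).trans (card_union_le _ _)
    _ ≤ 2 * #P := by rw [two_mul]; exact Nat.add_le_add_left card_image_le _
    _ ≤ 2 * ∑ ℓ : V × K, #((approvers l r (uncurry l ℓ)).erase ℓ.1) := by
        rw [← card_sigma]; gcongr; exact card_image_le

theorem card_mul_pred_add_le_two_mul_sum_Icc_min {a : ℕ} (hlr : ∀ v i, l v i ≤ r v i)
    (hl : Injective (uncurry l))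
    (hpair : ∀ u v, (intervalUnion (l u) (r u) ∩ intervalUnion (l v) (r v)).Nonempty)
    (hub : ∀ p, #(approvers l r p) ≤ a) :
    Fintype.card V * (Fintype.card V - 1) + 2 * Fintype.card (V × K) ≤
      2 * ∑ k ∈ Icc 1 (Fintype.card (V × K)), min a k := by
  have hcard_erase (ℓ : V × K) :
      #((approvers l r (uncurry l ℓ)).erase ℓ.1) + 1 = #(approvers l r (uncurry l ℓ)) :=
    card_erase_add_one <| mem_filter.2 ⟨mem_univ _, left_mem_intervalUnion (hlr ℓ.1 ℓ.2)⟩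
  calc Fintype.card V * (Fintype.card V - 1) + 2 * Fintype.card (V × K)
      ≤ 2 * ∑ ℓ : V × K, (#((approvers l r (uncurry l ℓ)).erase ℓ.1) + 1) := by
        rw [sum_add_distrib, mul_add, ← Fintype.card_eq_sum_ones]
        exact Nat.add_le_add_right (card_mul_pred_le_two_mul_sum_card_erase hpair) _
    _ = 2 * ∑ ℓ : V × K, #(approvers l r (uncurry l ℓ)) := by simp only [hcard_erase]
    _ ≤ 2 * ∑ ℓ : V × K, min a #{ℓ' | uncurry l ℓ' ≤ uncurry l ℓ} := by
        gcongr with ℓ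
        exact le_min (hub _) (card_approvers_le _)
    _ = 2 * ∑ k ∈ Icc 1 (Fintype.card (V × K)), min a k := by
        rw [sum_card_filter_le_eq_sum_Icc hl]

end Counting

theorem society_approval_lower_bound_general (n a : ℕ)
    (A₁ B₁ A₂ B₂ : Fin n → ℝ)
    (h₁ : ∀ v, A₁ v ≤ B₁ v) (h₃ : ∀ v, A₂ v ≤ B₂ v)
    (hdistinct : Function.Injective (fun x : Fin n × Fin 4 =>
      if x.2 = 0 then A₁ x.1 else if x.2 = 1 then B₁ x.1
      else if x.2 = 2 then A₂ x.1 else B₂ x.1))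
    (hpair : ∀ u v : Fin n, ∃ p : ℝ,
      p ∈ approvalSet (A₁ u) (B₁ u) (A₂ u) (B₂ u) ∧
      p ∈ approvalSet (A₁ v) (B₁ v) (A₂ v) (B₂ v))
    (hub : ∀ p : ℝ,
      Nat.card {v : Fin n // p ∈ approvalSet (A₁ v) (B₁ v) (A₂ v) (B₂ v)} ≤ a) :
    (a : ℤ) ≥ ⌈2 * (n : ℝ) + 1 / 2 - Real.sqrt (3 * (n : ℝ) ^ 2 - n + 1 / 4)⌉ := by
  classical
  set l : Fin n → Fin 2 → ℝ := fun v => ![A₁ v, A₂ v]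
  set r : Fin n → Fin 2 → ℝ := fun v => ![B₁ v, B₂ v]
  simp only [approvalSet_eq_intervalUnion] at hpair hub
  have hlr (v : Fin n) (i : Fin 2) : l v i ≤ r v i := by
    fin_cases i
    exacts [h₁ v, h₃ v]
  have hl : Injective (uncurry l) := by
    convert hdistinct.comp (injective_id.prodMap (by decide : Injective ![(0 : Fin 4), 2]))
      using 1
    funext ⟨v, i⟩
    fin_cases i <;> rfl
  -- Capping `a` at `n` provides `a ≤ 2n`, which the formula for `∑ min a k` needs.
  have hub' (p : ℝ) : #(approvers l r p) ≤ min a n := by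
    refine le_min ?_ ((card_filter_le _ _).trans (by simp))
    simpa [approvers, Nat.card_eq_fintype_card, Fintype.card_subtype] using hub p
  have hcount := card_mul_pred_add_le_two_mul_sum_Icc_min hlr hl hpair hub'
  have hsum := two_mul_sum_Icc_min_add (a := min a n) (N := n * 2) (by omega)
  simp only [Fintype.card_prod, Fintype.card_fin] at hcount
  have hn : n * (n - 1) + n = n * n := by
    rw [Nat.mul_sub_one, Nat.sub_add_cancel (Nat.le_mul_self n)]
  have hquad : n ^ 2 + 3 * n + min a n ^ 2 ≤ 4 * n * min a n + min a n := by nlinarith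
  replace hquad : (n : ℝ) ^ 2 + 3 * n + (min a n : ℕ) ^ 2 ≤
      4 * n * (min a n : ℕ) + (min a n : ℕ) := by
    exact_mod_cast hquad
  rw [ge_iff_le, Int.ceil_le]
  push_cast
  exact (two_mul_add_half_sub_sqrt_le hquad).trans (by exact_mod_cast min_le_left a n)

/-- Let `S` be a pairwise-intersecting double-interval society with `n` voters
and approval number `a`, with all interval endpoints distinct.  Then
`a ≥ ⌈2n + 1/2 − √(3n² − n + 1/4)⌉`. -/
theorem society_approval_lower_bound (n a : ℕ)
    (A₁ B₁ A₂ B₂ : Fin n → ℝ)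
    (h₁ : ∀ v, A₁ v ≤ B₁ v) (h₂ : ∀ v, B₁ v < A₂ v) (h₃ : ∀ v, A₂ v ≤ B₂ v)
    (hdistinct : Function.Injective (fun x : Fin n × Fin 4 =>
      if x.2 = 0 then A₁ x.1 else if x.2 = 1 then B₁ x.1
      else if x.2 = 2 then A₂ x.1 else B₂ x.1))
    (hpair : ∀ u v : Fin n, ∃ p : ℝ,
      p ∈ approvalSet (A₁ u) (B₁ u) (A₂ u) (B₂ u) ∧
      p ∈ approvalSet (A₁ v) (B₁ v) (A₂ v) (B₂ v))
    (hub : ∀ p : ℝ,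
      Nat.card {v : Fin n // p ∈ approvalSet (A₁ v) (B₁ v) (A₂ v) (B₂ v)} ≤ a)
    (hmax : ∃ p : ℝ,
      Nat.card {v : Fin n // p ∈ approvalSet (A₁ v) (B₁ v) (A₂ v) (B₂ v)} = a) :
    (a : ℤ) ≥ ⌈2 * (n : ℝ) + 1 / 2 - Real.sqrt (3 * (n : ℝ) ^ 2 - n + 1 / 4)⌉ :=
  society_approval_lower_bound_general n a A₁ B₁ A₂ B₂ h₁ h₃ hdistinct hpair hub
end
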